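/- Let ℓ be any index attaining the minimum of the ratios, i.e., u_ℓ = min_i u_i. Then (min_{j ≠ ℓ} v̂_ℓ A_{ℓ,j} v̂_j) · ∑_{j ≠ ℓ} (max_i u_i − u_j) ≤ 2ε · max_i u_i. -/

import Mathlib

/-!
Write `u i = v i / v̂ i` and `B i j = v̂ i A i j v̂ j`, so that the true scaling says
`u i · ∑ⱼ B i j u j = 1` for every `i`, while the row sums of `B` lie in `[1 - ε, 1 + ε]`.
At a maximiser `k` of `u`, the row of `k` gives `u_k · u_ℓ · (1 - ε) ≤ 1 = u_ℓ ∑ⱼ B ℓ j u j`,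
so `∑ⱼ B ℓ j u j ≥ u_k (1 - ε)`; combined with `∑ⱼ B ℓ j ≤ 1 + ε` this bounds
`∑ⱼ B ℓ j (u_k - u_j)` by `2 ε u_k`, and the left-hand side of the theorem is at most this sum.
-/

open Finset

theorem Finset.inf'_mul_sum_le_sum_mul {α : Type*} {s : Finset α} (hs : s.Nonempty)
    (f g : α → ℝ) (hg : ∀ i ∈ s, 0 ≤ g i) :
    s.inf' hs f * ∑ i ∈ s, g i ≤ ∑ i ∈ s, f i * g i := by
  rw [mul_sum]
  exact sum_le_sum fun i hi => mul_le_mul_of_nonneg_right (inf'_le f hi) (hg i hi)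

section Scaling

variable {ι : Type*} [Fintype ι]

theorem div_mul_sum_scaled_eq (A : ι → ι → ℝ) (v vh : ι → ℝ) (hvh : ∀ i, vh i ≠ 0) (i : ι) :
    v i / vh i * ∑ j, vh i * A i j * vh j * (v j / vh j) = ∑ j, v i * A i j * v j := by
  rw [mul_sum]
  refine sum_congr rfl fun j _ => ?_
  field_simp [hvh i, hvh j]

variable (B : ι → ι → ℝ) (u : ι → ℝ)

theorem mul_min_mul_row_sum_le_one (hrow : ∀ i, u i * ∑ j, B i j * u j = 1)
    (hB : ∀ i j, 0 ≤ B i j) {l : ι} (hl : ∀ j, u l ≤ u j)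
    {k : ι} (hk : 0 ≤ u k) : u k * (u l * ∑ j, B k j) ≤ 1 := by
  have hrow_ge : u l * ∑ j, B k j ≤ ∑ j, B k j * u j := by
    rw [mul_sum]
    exact sum_le_sum fun j _ => by nlinarith [hB k j, hl j]
  calc u k * (u l * ∑ j, B k j) ≤ u k * ∑ j, B k j * u j := mul_le_mul_of_nonneg_left hrow_ge hk
    _ = 1 := hrow k

theorem sum_mul_max_sub_le (hrow : ∀ i, u i * ∑ j, B i j * u j = 1)
    (hB : ∀ i j, 0 ≤ B i j) {ε : ℝ} {l k : ι}
    (hl : ∀ j, u l ≤ u j) (hul : 0 < u l) (hk : ∀ j, u j ≤ u k)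
    (hk_row : 1 - ε ≤ ∑ j, B k j) (hl_row : ∑ j, B l j ≤ 1 + ε) :
    ∑ j, B l j * (u k - u j) ≤ 2 * ε * u k := by
  have huk : 0 ≤ u k := hul.le.trans (hk l)
  have hl_weighted : u k * (1 - ε) ≤ ∑ j, B l j * u j := by
    refine le_of_mul_le_mul_left ?_ hul
    calc u l * (u k * (1 - ε)) ≤ u k * (u l * ∑ j, B k j) := by
          have := mul_le_mul_of_nonneg_left hk_row (mul_nonneg hul.le huk)
          linarith
      _ ≤ 1 := mul_min_mul_row_sum_le_one B u hrow hB hl huk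
      _ = u l * ∑ j, B l j * u j := (hrow l).symm
  have hsplit : ∑ j, B l j * (u k - u j) = u k * ∑ j, B l j - ∑ j, B l j * u j := by
    rw [mul_sum, ← sum_sub_distrib]
    exact sum_congr rfl fun j _ => by ring
  rw [hsplit]
  linarith [mul_le_mul_of_nonneg_left hl_row huk]

end Scaling

/-- If `l` attains the minimum of the ratios `u i = v i / v̂ i`, then
`(min_{j ≠ l} v̂_l A_{l,j} v̂_j) · ∑_{j ≠ l} (max_i u_i − u_j) ≤ 2ε · max_i u_i`. -/
theorem min_index_sum_bound
    {n : ℕ} (hn : 3 ≤ n)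
    (A : Fin n → Fin n → ℝ)
    (hA_nonneg : ∀ i j, 0 ≤ A i j)
    (v : Fin n → ℝ) (hv : ∀ i, 0 < v i)
    (hds : ∀ i, ∑ j, v i * A i j * v j = 1)
    (ε : ℝ)
    (vh : Fin n → ℝ) (hvh : ∀ i, 0 < vh i)
    (happrox : ∀ i, |∑ j, vh i * A i j * vh j - 1| ≤ ε)
    (l : Fin n) (hl : ∀ i, v l / vh l ≤ v i / vh i) :
    (Finset.inf' (Finset.univ.filter (fun j : Fin n => j ≠ l))
        ⟨_, Finset.mem_filter.mpr ⟨Finset.mem_univ _,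
          (Classical.choose_spec
            (@exists_ne (Fin n) (Fin.nontrivial_iff_two_le.mpr (by omega)) l))⟩⟩
        (fun j => vh l * A l j * vh j)) *
      (∑ j ∈ Finset.univ.filter (fun j : Fin n => j ≠ l),
        (Finset.sup' Finset.univ ⟨⟨0, by omega⟩, Finset.mem_univ _⟩
            (fun i => v i / vh i) - v j / vh j)) ≤
    2 * ε *
      Finset.sup' Finset.univ ⟨⟨0, by omega⟩, Finset.mem_univ _⟩
        (fun i => v i / vh i) := by
  set u : Fin n → ℝ := fun i => v i / vh i
  set B : Fin n → Fin n → ℝ := fun i j => vh i * A i j * vh j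
  have hB : ∀ i j, 0 ≤ B i j := fun i j =>
    mul_nonneg (mul_nonneg (hvh i).le (hA_nonneg i j)) (hvh j).le
  have hrow : ∀ i, u i * ∑ j, B i j * u j = 1 := fun i =>
    (div_mul_sum_scaled_eq A v vh (fun i => (hvh i).ne') i).trans (hds i)
  obtain ⟨k, -, hk_eq⟩ := exists_mem_eq_sup' (s := univ) ⟨⟨0, by omega⟩, mem_univ _⟩ u
  have hk : ∀ j, u j ≤ u k := fun j => hk_eq ▸ le_sup' u (mem_univ j)
  rw [hk_eq]
  calc _ ≤ ∑ j ∈ univ.filter (· ≠ l), B l j * (u k - u j) :=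
        inf'_mul_sum_le_sum_mul _ _ _ fun j _ => sub_nonneg.2 (hk j)
    _ ≤ ∑ j, B l j * (u k - u j) :=
        sum_le_univ_sum_of_nonneg fun j => mul_nonneg (hB l j) (sub_nonneg.2 (hk j))
    _ ≤ 2 * ε * u k :=
        sum_mul_max_sub_le B u hrow hB hl (div_pos (hv l) (hvh l)) hk
          (by linarith [(abs_le.1 (happrox k)).1]) (by linarith [(abs_le.1 (happrox l)).2])
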